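/- arXiv:2310.04340 — 2 statements merged into one kernel-verified Lean document; each statement's English description precedes it below -/
import Mathlib

section
/- For every symmetric matrix Q ∈ S^n and every ρ ∈ {1,…,n}, the Shor relaxation of the sparse StQP is exact, i.e., ℓ^{R2}_ρ(Q) = ℓ_ρ(Q), if and only if Q is positive semidefinite and min{xᵀQx : x ∈ F} has an optimal solution x* with ‖x*‖₀ ≤ ρ. -/
/-! For an R2(ρ)-feasible tuple, the Schur complement of the leading entry `1` gives `X ⪰ x xᵀ`,
so for `Q ⪰ 0` the relaxed objective satisfies `⟨Q, X⟩ ≥ xᵀ Q x ≥ ℓ(Q)`. Conversely every `x ∈ F`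
lifts to a feasible tuple with `X = x xᵀ`: take `u = x + c (e - x)` with `c ∈ [0, 1]` chosen so
that `eᵀ u = ρ`, `U = u uᵀ + Diag (u - u²)` and `R = x uᵀ`. Hence `ℓ^{R2}_ρ(Q) = ℓ(Q) ≤ ℓ_ρ(Q)`
for `Q ⪰ 0`, and by compactness equality holds iff some minimiser over `F` is `ρ`-sparse.
If `vᵀ Q v < 0`, adding `t v vᵀ` to `X` preserves feasibility and sends the relaxed objective to
`-∞`, while `ℓ_ρ(Q)` is a real number. -/

open Matrix BigOperators

noncomputable section

def simplexF (n : ℕ) : Set (Fin n → ℝ) :=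
  {x | (∑ i, x i) = 1 ∧ ∀ i, 0 ≤ x i}

def sparsity {n : ℕ} (x : Fin n → ℝ) : ℕ :=
  Set.ncard {i | x i ≠ 0}

def sparseF (n ρ : ℕ) : Set (Fin n → ℝ) :=
  {x | x ∈ simplexF n ∧ sparsity x ≤ ρ}

def quadForm {n : ℕ} (Q : Matrix (Fin n) (Fin n) ℝ) (x : Fin n → ℝ) : ℝ :=
  x ⬝ᵥ Q.mulVec x

def ell {n : ℕ} (Q : Matrix (Fin n) (Fin n) ℝ) : ℝ :=
  sInf (quadForm Q '' simplexF n)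

def ellSparse {n : ℕ} (Q : Matrix (Fin n) (Fin n) ℝ) (ρ : ℕ) : ℝ :=
  sInf (quadForm Q '' sparseF n ρ)

def ip {n : ℕ} (Q X : Matrix (Fin n) (Fin n) ℝ) : ℝ :=
  ∑ i, ∑ j, Q i j * X i j

def bigMat {n : ℕ} (x u : Fin n → ℝ) (X U R : Matrix (Fin n) (Fin n) ℝ) :
    Matrix (Unit ⊕ (Fin n ⊕ Fin n)) (Unit ⊕ (Fin n ⊕ Fin n)) ℝ :=
  Matrix.fromBlocks (Matrix.of fun _ _ => (1 : ℝ))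
    (Matrix.of fun (_ : Unit) j => Sum.elim x u j)
    (Matrix.of fun i (_ : Unit) => Sum.elim x u i)
    (Matrix.fromBlocks X R Rᵀ U)

def R2Feasible {n : ℕ} (ρ : ℕ) (x u : Fin n → ℝ)
    (X U R : Matrix (Fin n) (Fin n) ℝ) : Prop :=
  X.IsSymm ∧ U.IsSymm ∧
  (∑ i, x i) = 1 ∧ (∑ i, u i) = (ρ : ℝ) ∧
  (∀ i, U i i = u i) ∧
  (∀ i, 0 ≤ x i) ∧ (∀ i, x i ≤ u i) ∧
  (bigMat x u X U R).PosSemidef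

def FR2proj (n ρ : ℕ) : Set ((Fin n → ℝ) × Matrix (Fin n) (Fin n) ℝ) :=
  {p | ∃ u U R, R2Feasible ρ p.1 u p.2 U R}

def ellR2 {n : ℕ} (Q : Matrix (Fin n) (Fin n) ℝ) (ρ : ℕ) : EReal :=
  sInf ((fun p => ((ip Q p.2 : ℝ) : EReal)) '' FR2proj n ρ)

theorem Matrix.PosSemidef.isSymm {l : Type*} {A : Matrix l l ℝ} (hA : A.PosSemidef) : A.IsSymm := by
  have := hA.isHermitian.eq
  rwa [conjTranspose_eq_transpose_of_trivial] at this

section BlockMatrix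

variable {l m : Type*} [Fintype l] [Fintype m]

theorem posSemidef_fromBlocks_one_iff (w : l → ℝ) (M : Matrix l l ℝ) :
    (fromBlocks (of fun _ _ => (1 : ℝ)) (of fun (_ : Unit) j => w j) (of fun i (_ : Unit) => w i)
      M).PosSemidef ↔ (M - vecMulVec w w).PosSemidef := by
  have h_one : (of fun _ _ => (1 : ℝ) : Matrix Unit Unit ℝ) = 1 := by ext; simp
  have h_col : (of fun i (_ : Unit) => w i) = (of fun (_ : Unit) j => w j)ᴴ := by ext; simp
  let := invertibleOne (α := Matrix Unit Unit ℝ)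
  rw [h_one, h_col, PosDef.fromBlocks₁₁ _ _ PosDef.one, inv_one, Matrix.mul_one]
  congr! 2
  ext i j
  simp [vecMulVec_apply, Matrix.mul_apply]

theorem Matrix.PosSemidef.fromBlocks_zero {R : Type*} [CommRing R] [PartialOrder R] [StarRing R]
    [StarOrderedRing R] {A : Matrix l l R} {D : Matrix m m R}
    (hA : A.PosSemidef) (hD : D.PosSemidef) : (fromBlocks A 0 0 D).PosSemidef := by
  refine .of_dotProduct_mulVec_nonneg (hA.isHermitian.fromBlocks (by simp) hD.isHermitian)
    fun v => ?_
  rw [← Sum.elim_comp_inl_inr v, fromBlocks_mulVec, Function.star_sumElim]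
  simp only [Sum.elim_comp_inl, Sum.elim_comp_inr, zero_mulVec, add_zero, zero_add,
    sumElim_dotProduct_sumElim]
  simpa using add_nonneg (hA.dotProduct_mulVec_nonneg (v ∘ Sum.inl))
    (hD.dotProduct_mulVec_nonneg (v ∘ Sum.inr))

end BlockMatrix

theorem posSemidef_bigMat_iff {n : ℕ} (x u : Fin n → ℝ) (X U R : Matrix (Fin n) (Fin n) ℝ) :
    (bigMat x u X U R).PosSemidef ↔
      (fromBlocks X R Rᵀ U - vecMulVec (Sum.elim x u) (Sum.elim x u)).PosSemidef :=
  posSemidef_fromBlocks_one_iff _ _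

section FrobeniusPairing

variable {n : ℕ}

theorem ip_vecMulVec (Q : Matrix (Fin n) (Fin n) ℝ) (x y : Fin n → ℝ) :
    ip Q (vecMulVec x y) = x ⬝ᵥ Q *ᵥ y := by
  simp only [ip, vecMulVec_apply, dotProduct, mulVec, Finset.mul_sum]
  exact Finset.sum_congr rfl fun i _ => Finset.sum_congr rfl fun j _ => by ring

theorem ip_add (Q X Y : Matrix (Fin n) (Fin n) ℝ) : ip Q (X + Y) = ip Q X + ip Q Y := by
  simp [ip, mul_add, Finset.sum_add_distrib]

theorem ip_smul (Q X : Matrix (Fin n) (Fin n) ℝ) (t : ℝ) : ip Q (t • X) = t * ip Q X := by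
  simp only [ip, Matrix.smul_apply, smul_eq_mul, Finset.mul_sum]
  exact Finset.sum_congr rfl fun i _ => Finset.sum_congr rfl fun j _ => by ring

theorem ip_nonneg {Q X : Matrix (Fin n) (Fin n) ℝ} (hQ : Q.PosSemidef) (hX : X.PosSemidef) :
    0 ≤ ip Q X := by
  -- `ip Q X = 1ᵀ (Q ⊙ X) 1`, and `Q ⊙ X ⪰ 0` by the Schur product theorem
  have h := (hQ.hadamard hX).dotProduct_mulVec_nonneg 1
  simpa [ip, dotProduct, mulVec] using h

end FrobeniusPairing

section Relaxation

variable {n ρ : ℕ}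

theorem R2Feasible.posSemidef_sub_vecMulVec {x u : Fin n → ℝ} {X U R : Matrix (Fin n) (Fin n) ℝ}
    (h : R2Feasible ρ x u X U R) : (X - vecMulVec x x).PosSemidef := by
  have h_schur := (posSemidef_bigMat_iff x u X U R).mp h.2.2.2.2.2.2.2
  convert h_schur.submatrix Sum.inl using 1
  ext i j
  simp [vecMulVec_apply]

theorem R2Feasible.quadForm_le_ip {Q : Matrix (Fin n) (Fin n) ℝ} (hQ : Q.PosSemidef)
    {x u : Fin n → ℝ} {X U R : Matrix (Fin n) (Fin n) ℝ} (h : R2Feasible ρ x u X U R) :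
    quadForm Q x ≤ ip Q X := by
  have h_split : ip Q X = ip Q (X - vecMulVec x x) + quadForm Q x := by
    rw [quadForm, ← ip_vecMulVec, ← ip_add, sub_add_cancel]
  linarith [ip_nonneg hQ h.posSemidef_sub_vecMulVec]

theorem r2Feasible_vecMulVec {x u : Fin n → ℝ} (hx : ∑ i, x i = 1) (hu : ∑ i, u i = ρ)
    (hx0 : ∀ i, 0 ≤ x i) (hxu : ∀ i, x i ≤ u i) (hu1 : ∀ i, u i ≤ 1) :
    R2Feasible ρ x u (vecMulVec x x) (vecMulVec u u + diagonal (u - u * u)) (vecMulVec x u) := by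
  have hd : (diagonal (u - u * u)).PosSemidef :=
    .diagonal fun i => show 0 ≤ u i - u i * u i by nlinarith [hx0 i, hxu i, hu1 i]
  refine ⟨(posSemidef_vecMulVec_self_star x).isSymm,
    ((posSemidef_vecMulVec_self_star u).add hd).isSymm, hx, hu, fun i => ?_, hx0, hxu, ?_⟩
  · simp [vecMulVec_apply]
  · have h_gap : fromBlocks (vecMulVec x x) (vecMulVec x u) (vecMulVec x u)ᵀ
          (vecMulVec u u + diagonal (u - u * u)) - vecMulVec (Sum.elim x u) (Sum.elim x u) =
        fromBlocks 0 0 0 (diagonal (u - u * u)) := by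
      ext (i | i) (j | j) <;> simp [vecMulVec_apply, mul_comm]
    rw [posSemidef_bigMat_iff, h_gap]
    exact PosSemidef.zero.fromBlocks_zero hd

theorem R2Feasible.mem_simplexF {x u : Fin n → ℝ} {X U R : Matrix (Fin n) (Fin n) ℝ}
    (h : R2Feasible ρ x u X U R) : x ∈ simplexF n :=
  ⟨h.2.2.1, h.2.2.2.2.2.1⟩

theorem exists_le_le_one_sum_eq {ι : Type*} [Fintype ι] {x : ι → ℝ} (hx1 : ∀ i, x i ≤ 1)
    {r : ℝ} (hlo : ∑ i, x i ≤ r) (hhi : r ≤ Fintype.card ι) :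
    ∃ u : ι → ℝ, (∀ i, x i ≤ u i) ∧ (∀ i, u i ≤ 1) ∧ ∑ i, u i = r := by
  set s := ∑ i, x i
  set N : ℝ := (Fintype.card ι : ℝ)
  set c := (r - s) / (N - s)
  have hc0 : 0 ≤ c := div_nonneg (by linarith) (by linarith)
  have hc1 : c ≤ 1 := div_le_one_of_le₀ (by linarith) (by linarith)
  refine ⟨fun i => x i + c * (1 - x i), fun i => ?_, fun i => ?_, ?_⟩
  · nlinarith [hx1 i]
  · nlinarith [hx1 i]
  · have h_sum : ∑ i, (x i + c * (1 - x i)) = s + c * (N - s) := by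
      simp [N, s, Finset.sum_add_distrib, ← Finset.mul_sum, Finset.sum_sub_distrib]
    rw [h_sum]
    -- if `N = s` then `r = s`, and `c` is the junk value `0`
    rcases eq_or_ne (N - s) 0 with hN | hN
    · rw [hN]; linarith
    · rw [div_mul_cancel₀ _ hN]; ring

theorem mk_vecMulVec_mem_FR2proj {x : Fin n → ℝ} (hx : x ∈ simplexF n) (h1 : 1 ≤ ρ)
    (h2 : ρ ≤ n) : (x, vecMulVec x x) ∈ FR2proj n ρ := by
  obtain ⟨hsum, hx0⟩ := hx
  have hx1 : ∀ i, x i ≤ 1 := fun i =>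
    hsum ▸ Finset.single_le_sum (fun j _ => hx0 j) (Finset.mem_univ i)
  obtain ⟨u, hxu, hu1, hu⟩ := exists_le_le_one_sum_eq hx1 (r := ρ)
    (by rw [hsum]; exact_mod_cast h1) (by simpa using (Nat.cast_le (α := ℝ)).2 h2)
  exact ⟨u, _, _, r2Feasible_vecMulVec hsum hu hx0 hxu hu1⟩

theorem mem_FR2proj_add_posSemidef {x : Fin n → ℝ} {X P : Matrix (Fin n) (Fin n) ℝ}
    (h : (x, X) ∈ FR2proj n ρ) (hP : P.PosSemidef) : (x, X + P) ∈ FR2proj n ρ := by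
  obtain ⟨u, U, R, hX, hU, hx, hu, hUu, hx0, hxu, hpsd⟩ := h
  refine ⟨u, U, R, hX.add hP.isSymm, hU, hx, hu, hUu, hx0, hxu, ?_⟩
  rw [posSemidef_bigMat_iff] at hpsd ⊢
  have h_split : fromBlocks (X + P) R Rᵀ U = fromBlocks X R Rᵀ U + fromBlocks P 0 0 0 := by
    simp [fromBlocks_add]
  rw [h_split, add_sub_right_comm]
  exact hpsd.add (hP.fromBlocks_zero PosSemidef.zero)

end Relaxation

theorem single_mem_sparseF {n ρ : ℕ} (i : Fin n) (h1 : 1 ≤ ρ) : Pi.single i 1 ∈ sparseF n ρ := by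
  refine ⟨⟨by simp, fun j => ?_⟩, ?_⟩
  · by_cases hj : j = i <;> simp [hj]
  · rw [sparsity, ← Function.support, Pi.support_single_of_ne one_ne_zero, Set.ncard_singleton]
    exact h1

theorem lowerSemicontinuous_sparsity {n : ℕ} : LowerSemicontinuous (sparsity : (Fin n → ℝ) → ℕ) := by
  intro x k hk
  have h_near : ∀ᶠ y in nhds x, ∀ i ∈ Function.support x, y i ≠ 0 :=
    (Filter.eventually_all_finite (Set.toFinite _)).2 fun i hi =>
      (continuous_apply i).continuousAt.eventually_ne hi
  filter_upwards [h_near] with y hy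
  exact hk.trans_le (Set.ncard_le_ncard hy (Set.toFinite _))

theorem isCompact_simplexF (n : ℕ) : IsCompact (simplexF n) := by
  have h : simplexF n = stdSimplex ℝ (Fin n) := by ext; exact and_comm
  exact h ▸ isCompact_stdSimplex ℝ (Fin n)

theorem isCompact_sparseF (n ρ : ℕ) : IsCompact (sparseF n ρ) :=
  (isCompact_simplexF n).inter_right (lowerSemicontinuous_sparsity.isClosed_preimage ρ)

theorem exists_forall_quadForm_le {n : ℕ} (Q : Matrix (Fin n) (Fin n) ℝ) {s : Set (Fin n → ℝ)}
    (hs : IsCompact s) (hne : s.Nonempty) : ∃ x ∈ s, ∀ y ∈ s, quadForm Q x ≤ quadForm Q y := by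
  have h_cont : Continuous (quadForm Q) := by
    show Continuous fun x => x ⬝ᵥ Q *ᵥ x
    fun_prop
  exact hs.exists_isMinOn hne h_cont.continuousOn

section Values

variable {n ρ : ℕ}

theorem ellSparse_eq_quadForm {Q : Matrix (Fin n) (Fin n) ℝ} {x : Fin n → ℝ}
    (hx : x ∈ sparseF n ρ) (hmin : ∀ y ∈ sparseF n ρ, quadForm Q x ≤ quadForm Q y) :
    ellSparse Q ρ = quadForm Q x :=
  IsLeast.csInf_eq ⟨⟨x, hx, rfl⟩, by rintro _ ⟨y, hy, rfl⟩; exact hmin y hy⟩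

theorem ellR2_le_quadForm (Q : Matrix (Fin n) (Fin n) ℝ) (h1 : 1 ≤ ρ) (h2 : ρ ≤ n)
    {x : Fin n → ℝ} (hx : x ∈ simplexF n) : ellR2 Q ρ ≤ quadForm Q x :=
  sInf_le ⟨_, mk_vecMulVec_mem_FR2proj hx h1 h2, by simp [ip_vecMulVec, quadForm]⟩

theorem le_ellR2 {Q : Matrix (Fin n) (Fin n) ℝ} (hQ : Q.PosSemidef) {c : ℝ}
    (hc : ∀ y ∈ simplexF n, c ≤ quadForm Q y) : (c : EReal) ≤ ellR2 Q ρ := by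
  refine le_sInf ?_
  rintro _ ⟨⟨x, X⟩, ⟨u, U, R, h⟩, rfl⟩
  exact EReal.coe_le_coe_iff.2 ((hc x h.mem_simplexF).trans (h.quadForm_le_ip hQ))

theorem ellR2_eq_bot_of_ip_neg {Q X P : Matrix (Fin n) (Fin n) ℝ} {x : Fin n → ℝ}
    (hX : (x, X) ∈ FR2proj n ρ) (hP : P.PosSemidef) (hQP : ip Q P < 0) : ellR2 Q ρ = ⊥ := by
  refine (EReal.eq_bot_iff_forall_lt _).2 fun y => ?_
  set t := max 0 ((ip Q X - y + 1) / -ip Q P)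
  have ht : 0 ≤ t := le_max_left _ _
  have h_val : ip Q X + t * ip Q P < y := by
    have : (ip Q X - y + 1) / -ip Q P ≤ t := le_max_right _ _
    rw [div_le_iff₀ (neg_pos.2 hQP)] at this
    linarith
  calc ellR2 Q ρ ≤ ip Q (X + t • P) :=
        sInf_le ⟨_, mem_FR2proj_add_posSemidef hX (hP.smul ht), rfl⟩
    _ < y := by rw [ip_add, ip_smul]; exact_mod_cast h_val

theorem ellR2_eq_bot {Q : Matrix (Fin n) (Fin n) ℝ} (hQ : Q.IsSymm) (hQ' : ¬Q.PosSemidef)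
    (h1 : 1 ≤ ρ) (h2 : ρ ≤ n) : ellR2 Q ρ = ⊥ := by
  obtain ⟨v, hv⟩ : ∃ v, v ⬝ᵥ Q *ᵥ v < 0 := by
    by_contra! h
    have hQh : Q.IsHermitian := by rwa [IsHermitian, conjTranspose_eq_transpose_of_trivial]
    exact hQ' (.of_dotProduct_mulVec_nonneg hQh fun v => by simpa using h v)
  have hx := (single_mem_sparseF (⟨0, by omega⟩ : Fin n) h1).1
  refine ellR2_eq_bot_of_ip_neg (mk_vecMulVec_mem_FR2proj hx h1 h2)
    (posSemidef_vecMulVec_self_star v) ?_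
  simpa [ip_vecMulVec] using hv

end Values

theorem stmt9_general {n : ℕ} (Q : Matrix (Fin n) (Fin n) ℝ) (hQ : Q.IsSymm)
    (ρ : ℕ) (h1 : 1 ≤ ρ) (h2 : ρ ≤ n) :
    ellR2 Q ρ = (ellSparse Q ρ : EReal) ↔
      Q.PosSemidef ∧
        ∃ x ∈ simplexF n, (∀ y ∈ simplexF n, quadForm Q x ≤ quadForm Q y) ∧
          sparsity x ≤ ρ := by
  have h_single := single_mem_sparseF (⟨0, by omega⟩ : Fin n) h1
  constructor
  · intro h
    have hQ' : Q.PosSemidef := by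
      by_contra hQ'
      rw [ellR2_eq_bot hQ hQ' h1 h2] at h
      exact EReal.bot_ne_coe _ h
    obtain ⟨xs, hxs, hxs_min⟩ :=
      exists_forall_quadForm_le Q (isCompact_sparseF n ρ) ⟨_, h_single⟩
    obtain ⟨x, hx, hx_min⟩ :=
      exists_forall_quadForm_le Q (isCompact_simplexF n) ⟨_, h_single.1⟩
    have h_le : quadForm Q xs ≤ quadForm Q x := by
      have := ellR2_le_quadForm Q h1 h2 hx
      rwa [h, ellSparse_eq_quadForm hxs hxs_min, EReal.coe_le_coe_iff] at this
    exact ⟨hQ', xs, hxs.1, fun y hy => h_le.trans (hx_min y hy), hxs.2⟩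
  · rintro ⟨hQ', x, hx, hx_min, hxρ⟩
    rw [ellSparse_eq_quadForm ⟨hx, hxρ⟩ fun y hy => hx_min y hy.1]
    exact le_antisymm (ellR2_le_quadForm Q h1 h2 hx) (le_ellR2 hQ' hx_min)

theorem stmt9 {n : ℕ} (hn : 0 < n) (Q : Matrix (Fin n) (Fin n) ℝ) (hQ : Q.IsSymm)
    (ρ : ℕ) (h1 : 1 ≤ ρ) (h2 : ρ ≤ n) :
    ellR2 Q ρ = (ellSparse Q ρ : EReal) ↔
      Q.PosSemidef ∧
        ∃ x ∈ simplexF n, (∀ y ∈ simplexF n, quadForm Q x ≤ quadForm Q y) ∧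
          sparsity x ≤ ρ :=
  stmt9_general Q hQ ρ h1 h2

end
end

section
/- Let Q ∈ S^n. (i) For each ρ ∈ {2,…,n}, if there exists an optimal solution (x*,X*) of min{⟨Q,X⟩ : (x,X) ∈ F^{R3}} with ‖x*‖₀ ≤ ρ, then ℓ^{R3}(Q) = ℓ^{R3}_ρ(Q). (ii) F^{R3}_n = F^{R3} and ℓ^{R3}(Q) = ℓ^{R3}_n(Q). -/
open Matrix BigOperators

noncomputable section

def R1Feasible {n : ℕ} (ρ : ℕ) (x u : Fin n → ℝ)
    (X U R : Matrix (Fin n) (Fin n) ℝ) : Prop :=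
  X.IsSymm ∧ U.IsSymm ∧
  (∑ i, x i) = 1 ∧
  (∑ i, u i) = (ρ : ℝ) ∧
  (∀ i, x i ≤ u i) ∧
  (∀ i, 0 ≤ x i) ∧
  (∀ i, U i i = u i) ∧
  (∀ i, (∑ j, X i j) = x i) ∧
  (∀ j, (∑ i, R i j) = u j) ∧
  (∀ i, (∑ j, R i j) = (ρ : ℝ) * x i) ∧
  (∀ i, (∑ j, U i j) = (ρ : ℝ) * u i) ∧
  (∀ i j, 0 ≤ X i j - R j i - R i j + U i j) ∧
  (∀ i j, X i j - R j i ≤ 0) ∧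
  (∀ i j, R i j - U i j ≤ 0) ∧
  (∀ i j, 0 ≤ X i j) ∧ (∀ i j, 0 ≤ R i j) ∧ (∀ i j, 0 ≤ U i j)

def FR1proj (n ρ : ℕ) : Set ((Fin n → ℝ) × Matrix (Fin n) (Fin n) ℝ) :=
  {p | ∃ u U R, R1Feasible ρ p.1 u p.2 U R}

def FR1 (n : ℕ) : Set ((Fin n → ℝ) × Matrix (Fin n) (Fin n) ℝ) :=
  {p | p.2.IsSymm ∧ (∑ i, p.1 i) = 1 ∧ (∀ i, (∑ j, p.2 i j) = p.1 i) ∧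
    (∀ i, 0 ≤ p.1 i) ∧ (∀ i j, 0 ≤ p.2 i j)}

def R3Feasible {n : ℕ} (ρ : ℕ) (x u : Fin n → ℝ)
    (X U R : Matrix (Fin n) (Fin n) ℝ) : Prop :=
  R1Feasible ρ x u X U R ∧ (bigMat x u X U R).PosSemidef

def FR3proj (n ρ : ℕ) : Set ((Fin n → ℝ) × Matrix (Fin n) (Fin n) ℝ) :=
  {p | ∃ u U R, R3Feasible ρ p.1 u p.2 U R}

def FR3 (n : ℕ) : Set ((Fin n → ℝ) × Matrix (Fin n) (Fin n) ℝ) :=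
  {p | p.2.IsSymm ∧ (∑ i, p.1 i) = 1 ∧ (∀ i, (∑ j, p.2 i j) = p.1 i) ∧
    (∀ i, 0 ≤ p.1 i) ∧ (∀ i j, 0 ≤ p.2 i j) ∧
    (p.2 - Matrix.vecMulVec p.1 p.1).PosSemidef}

def ellR3 {n : ℕ} (Q : Matrix (Fin n) (Fin n) ℝ) : ℝ :=
  sInf ((fun p => ip Q p.2) '' FR3 n)

def ellR3proj {n : ℕ} (Q : Matrix (Fin n) (Fin n) ℝ) (ρ : ℕ) : ℝ :=
  sInf ((fun p => ip Q p.2) '' FR3proj n ρ)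

/-! Taking the Schur complement of the leading `1`, the block matrix of an R3(ρ)-feasible point is
PSD iff `[[X, R], [Rᵀ, U]] - (x, u)(x, u)ᵀ` is, and the top-left block of the latter is `X - xxᵀ`;
hence `F^{R3}_ρ ⊆ F^{R3}`. Conversely a point `(x, X) ∈ F^{R3}` supported in a set `S` lifts with
`u = 𝟙_S`, `U = uuᵀ`, `R = xuᵀ`: the Schur complement becomes `X - xxᵀ` padded by zeros, and the
entrywise constraints hold because `u` is 0/1 and `X` vanishes off `S × S`. Padding the support of a
sparse minimiser to exactly `ρ` indices puts it in `F^{R3}_ρ`, so both infima are attained at it. -/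

lemma csInf_image_eq_of_isMinOn {α β : Type*} [ConditionallyCompleteLattice β] {f : α → β}
    {A B : Set α} {a : α} (hAB : A ⊆ B) (ha : a ∈ A) (hmin : IsMinOn f B a) :
    sInf (f '' A) = sInf (f '' B) := by
  have isLeast {s : Set α} (has : a ∈ s) (h : IsMinOn f s a) : IsLeast (f '' s) (f a) :=
    ⟨Set.mem_image_of_mem f has, Set.forall_mem_image.2 (isMinOn_iff.1 h)⟩
  rw [(isLeast ha (hmin.on_subset hAB)).csInf_eq, (isLeast (hAB ha) hmin).csInf_eq]

section

variable {n : ℕ}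

lemma bigMat_posSemidef_iff (x u : Fin n → ℝ) (X U R : Matrix (Fin n) (Fin n) ℝ) :
    (bigMat x u X U R).PosSemidef ↔
      (fromBlocks X R Rᵀ U - vecMulVec (Sum.elim x u) (Sum.elim x u)).PosSemidef := by
  have hB : (of fun (_ : Unit) j => Sum.elim x u j)ᴴ = of fun i (_ : Unit) => Sum.elim x u i := by
    ext; simp
  have hA : (of fun (_ : Unit) (_ : Unit) => (1 : ℝ)) = 1 := by ext; simp
  let _ : Invertible (1 : Matrix Unit Unit ℝ) := invertibleOne
  rw [bigMat, ← hB, hA, PosDef.fromBlocks₁₁ _ _ PosDef.one, inv_one, Matrix.mul_one]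
  congr! 2
  ext i j
  simp [mul_apply, vecMulVec_apply]

lemma Matrix.PosSemidef.sub_vecMulVec_of_bigMat {x u : Fin n → ℝ}
    {X U R : Matrix (Fin n) (Fin n) ℝ} (h : (bigMat x u X U R).PosSemidef) :
    (X - vecMulVec x x).PosSemidef := by
  convert ((bigMat_posSemidef_iff x u X U R).1 h).submatrix Sum.inl using 1
  ext i j
  simp [vecMulVec_apply]

lemma Matrix.PosSemidef.bigMat_vecMulVec {x : Fin n → ℝ} {X : Matrix (Fin n) (Fin n) ℝ}
    (h : (X - vecMulVec x x).PosSemidef) (u : Fin n → ℝ) :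
    (bigMat x u X (vecMulVec u u) (vecMulVec x u)).PosSemidef := by
  rw [bigMat_posSemidef_iff]
  have embed := h.conjTranspose_mul_mul_same
    (fromCols (1 : Matrix (Fin n) (Fin n) ℝ) (0 : Matrix (Fin n) (Fin n) ℝ))
  convert embed using 1
  rw [conjTranspose_fromCols_eq_fromRows_conjTranspose, fromRows_mul, fromRows_mul_fromCols]
  ext (i | i) (j | j) <;> simp [vecMulVec_apply, mul_comm]

lemma FR3proj_subset_FR3 (ρ : ℕ) : FR3proj n ρ ⊆ FR3 n := by
  rintro p ⟨u, U, R, ⟨hXs, -, hx1, -, -, hx0, -, hXrow, -, -, -, -, -, -, hX0, -, -⟩, hpsd⟩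
  exact ⟨hXs, hx1, hXrow, hx0, hX0, hpsd.sub_vecMulVec_of_bigMat⟩

namespace FR3

variable {x : Fin n → ℝ} {X : Matrix (Fin n) (Fin n) ℝ}

lemma apply_le_one (hp : (x, X) ∈ FR3 n) (i : Fin n) : x i ≤ 1 := by
  obtain ⟨-, hx1, -, hx0, -⟩ := hp
  exact hx1 ▸ Finset.single_le_sum (fun j _ => hx0 j) (Finset.mem_univ i)

lemma entry_le_left (hp : (x, X) ∈ FR3 n) (i j : Fin n) : X i j ≤ x i := by
  obtain ⟨-, -, hXrow, -, hX0, -⟩ := hp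
  exact (Finset.single_le_sum (fun k _ => hX0 i k) (Finset.mem_univ j)).trans_eq (hXrow i)

lemma entry_le_right (hp : (x, X) ∈ FR3 n) (i j : Fin n) : X i j ≤ x j :=
  (hp.1.apply j i).trans_le (entry_le_left hp j i)

lemma entry_eq_zero_left (hp : (x, X) ∈ FR3 n) {i : Fin n} (hi : x i = 0) (j : Fin n) :
    X i j = 0 :=
  le_antisymm (hi ▸ entry_le_left hp i j) (hp.2.2.2.2.1 i j)

lemma entry_eq_zero_right (hp : (x, X) ∈ FR3 n) (i : Fin n) {j : Fin n} (hj : x j = 0) :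
    X i j = 0 :=
  (hp.1.apply j i).trans (entry_eq_zero_left hp hj i)

lemma sq_le_diag (hp : (x, X) ∈ FR3 n) (i : Fin n) : x i ^ 2 ≤ X i i := by
  obtain ⟨-, -, -, -, -, hpsd⟩ := hp
  have hdiag := hpsd.diag_nonneg (i := i)
  simp only [Matrix.sub_apply, vecMulVec_apply] at hdiag
  nlinarith

lemma add_le_one_add_entry (hp : (x, X) ∈ FR3 n) (i j : Fin n) : x i + x j ≤ 1 + X i j := by
  obtain ⟨-, hx1, -, hx0, hX0, -⟩ := id hp
  rcases eq_or_ne i j with rfl | hij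
  · nlinarith [sq_le_diag hp i, sq_nonneg (x i - 1)]
  · have hpair : x i + x j ≤ ∑ k, x k := by
      rw [← Finset.sum_pair hij]
      exact Finset.sum_le_sum_of_subset_of_nonneg (Finset.subset_univ _) fun k _ _ => hx0 k
    linarith [hX0 i j]

end FR3

lemma R3Feasible_of_mem_FR3 {x : Fin n → ℝ} {X : Matrix (Fin n) (Fin n) ℝ} (hp : (x, X) ∈ FR3 n)
    {S : Finset (Fin n)} (hS : ∀ i, x i ≠ 0 → i ∈ S) :
    let u := (S : Set (Fin n)).indicator 1
    R3Feasible S.card x u X (vecMulVec u u) (vecMulVec x u) := by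
  intro u
  obtain ⟨hXs, hx1, hXrow, hx0, hX0, hpsd⟩ := id hp
  have hu : ∀ i, u i = 0 ∧ x i = 0 ∨ u i = 1 := by
    intro i
    by_cases hi : i ∈ S
    · simp [u, hi]
    · exact .inl ⟨by simp [u, hi], not_not.1 (mt (hS i) hi)⟩
  have hu0 : ∀ i, 0 ≤ u i := fun i => by rcases hu i with ⟨h, -⟩ | h <;> simp [h]
  have hxu : ∀ i, x i ≤ u i := fun i => by
    rcases hu i with ⟨hui, hxi⟩ | hui
    · rw [hui, hxi]
    · rw [hui]; exact FR3.apply_le_one hp i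
  have hsum : ∑ i, u i = S.card := by simp [u, Set.indicator_apply]
  refine ⟨⟨hXs, transpose_vecMulVec u u, hx1, hsum, hxu, hx0, ?_, hXrow, ?_, ?_, ?_, ?_, ?_, ?_,
    hX0, ?_, ?_⟩, hpsd.bigMat_vecMulVec u⟩
  · intro i
    rcases hu i with ⟨h, -⟩ | h <;> simp [vecMulVec_apply, h]
  · intro j
    simp only [vecMulVec_apply, ← Finset.sum_mul, hx1, one_mul]
  · intro i
    simp only [vecMulVec_apply, ← Finset.mul_sum, hsum, mul_comm]
  · intro i
    simp only [vecMulVec_apply, ← Finset.mul_sum, hsum, mul_comm]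
  · intro i j
    simp only [vecMulVec_apply]
    rcases hu i with ⟨hui, hxi⟩ | hui
    · simp [hui, hxi, FR3.entry_eq_zero_left hp hxi j]
    rcases hu j with ⟨huj, hxj⟩ | huj
    · simp [huj, hxj, FR3.entry_eq_zero_right hp i hxj]
    · rw [hui, huj]
      linarith [FR3.add_le_one_add_entry hp i j]
  · intro i j
    simp only [vecMulVec_apply]
    rcases hu i with ⟨hui, hxi⟩ | hui
    · simp [hui, FR3.entry_eq_zero_left hp hxi j]
    · simp [hui, FR3.entry_le_right hp i j]
  · intro i j
    simp only [vecMulVec_apply, ← sub_mul]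
    exact mul_nonpos_of_nonpos_of_nonneg (sub_nonpos.2 (hxu i)) (hu0 j)
  · exact fun i j => mul_nonneg (hx0 i) (hu0 j)
  · exact fun i j => mul_nonneg (hu0 i) (hu0 j)

lemma mem_FR3proj_of_support_subset {p : (Fin n → ℝ) × Matrix (Fin n) (Fin n) ℝ}
    (hp : p ∈ FR3 n) {S : Finset (Fin n)} (hS : ∀ i, p.1 i ≠ 0 → i ∈ S) :
    p ∈ FR3proj n S.card :=
  ⟨_, _, _, R3Feasible_of_mem_FR3 hp hS⟩

lemma FR3proj_self : FR3proj n n = FR3 n :=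
  (FR3proj_subset_FR3 n).antisymm fun _ hp => by
    simpa using mem_FR3proj_of_support_subset hp (S := Finset.univ) fun i _ => Finset.mem_univ i

lemma exists_support_subset_card_eq (x : Fin n → ℝ) {ρ : ℕ} (hx : sparsity x ≤ ρ) (hρ : ρ ≤ n) :
    ∃ S : Finset (Fin n), (∀ i, x i ≠ 0 → i ∈ S) ∧ S.card = ρ := by
  classical
  rw [sparsity, Set.ncard_eq_toFinset_card'] at hx
  obtain ⟨S, hsub, -, hcard⟩ :=
    Finset.exists_subsuperset_card_eq (Finset.subset_univ _) hx (by simpa using hρ)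
  exact ⟨S, fun i hi => hsub (by simpa using hi), hcard⟩

end

theorem stmt15_general {n : ℕ} (Q : Matrix (Fin n) (Fin n) ℝ) :
    (∀ ρ : ℕ, 2 ≤ ρ → ρ ≤ n →
      (∃ p ∈ FR3 n, (∀ q ∈ FR3 n, ip Q p.2 ≤ ip Q q.2) ∧ sparsity p.1 ≤ ρ) →
        ellR3 Q = ellR3proj Q ρ) ∧
    (FR3proj n n = FR3 n ∧ ellR3 Q = ellR3proj Q n) := by
  refine ⟨fun ρ _ hρn ⟨p, hp, hmin, hsp⟩ => ?_, FR3proj_self,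
    by rw [ellR3proj, FR3proj_self, ellR3]⟩
  obtain ⟨S, hS, rfl⟩ := exists_support_subset_card_eq p.1 hsp hρn
  exact (csInf_image_eq_of_isMinOn (FR3proj_subset_FR3 _)
    (mem_FR3proj_of_support_subset hp hS) (isMinOn_iff.2 hmin)).symm

theorem stmt15 {n : ℕ} (hn : 0 < n) (Q : Matrix (Fin n) (Fin n) ℝ) (hQ : Q.IsSymm) :
    (∀ ρ : ℕ, 2 ≤ ρ → ρ ≤ n →
      (∃ p ∈ FR3 n, (∀ q ∈ FR3 n, ip Q p.2 ≤ ip Q q.2) ∧ sparsity p.1 ≤ ρ) →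
        ellR3 Q = ellR3proj Q ρ) ∧
    (FR3proj n n = FR3 n ∧ ellR3 Q = ellR3proj Q n) :=
  stmt15_general Q

end
end
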